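/- The point ((192 − 85√3)/122, (115 − 22√3)/122, (115 − 22√3)/122) is equidistant from A = (0,2,2) and B = (4−√3, 1, 1), with common distance r = √(94725 − 21288√3)/122, and r < 2. -/

import Mathlib

noncomputable def pt3 (a b c : ℝ) : EuclideanSpace ℝ (Fin 3) := WithLp.toLp 2 ![a, b, c]

open Real

lemma dist_pt3 (a b c a' b' c' : ℝ) :
    dist (pt3 a b c) (pt3 a' b' c') = √((a - a') ^ 2 + (b - b') ^ 2 + (c - c') ^ 2) := by
  rw [EuclideanSpace.dist_eq, Fin.sum_univ_three]
  simp [pt3, Real.dist_eq, sq_abs]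

lemma sqrt_div_sq_of_nonneg (x : ℝ) {d : ℝ} (hd : 0 ≤ d) : √(x / d ^ 2) = √x / d := by
  rw [sqrt_div' x (sq_nonneg d), sqrt_sq hd]

/-- The point `((192 − 85√3)/122, (115 − 22√3)/122, (115 − 22√3)/122)` is equidistant
from `A = (0,2,2)` and `B = (4−√3, 1, 1)`, with common distance
`r = √(94725 − 21288√3)/122`, and `r < 2`. -/
theorem stmt10 :
    dist (pt3 ((192 - 85 * Real.sqrt 3) / 122) ((115 - 22 * Real.sqrt 3) / 122)
        ((115 - 22 * Real.sqrt 3) / 122)) (pt3 0 2 2)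
      = Real.sqrt (94725 - 21288 * Real.sqrt 3) / 122 ∧
    dist (pt3 ((192 - 85 * Real.sqrt 3) / 122) ((115 - 22 * Real.sqrt 3) / 122)
        ((115 - 22 * Real.sqrt 3) / 122)) (pt3 (4 - Real.sqrt 3) 1 1)
      = Real.sqrt (94725 - 21288 * Real.sqrt 3) / 122 ∧
    Real.sqrt (94725 - 21288 * Real.sqrt 3) / 122 < 2 := by
  have h3 : √3 ^ 2 = 3 := sq_sqrt (by norm_num)
  refine ⟨?_, ?_, ?_⟩
  · rw [dist_pt3, ← sqrt_div_sq_of_nonneg _ (by norm_num : (0 : ℝ) ≤ 122)]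
    congr 1
    linear_combination (8193 / 14884 : ℝ) * h3
  · rw [dist_pt3, ← sqrt_div_sq_of_nonneg _ (by norm_num : (0 : ℝ) ≤ 122)]
    congr 1
    linear_combination (2337 / 14884 : ℝ) * h3
  · -- `r < 2` amounts to `35189 < 21288 √3`, i.e. `√3 > 1.653…`
    have hsqrt3 : (1.66 : ℝ) < √3 := (lt_sqrt (by norm_num)).2 (by norm_num)
    rw [div_lt_iff₀ (by norm_num), sqrt_lt' (by norm_num)]
    linarith
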